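/- arXiv:1708.00880 — 4 statements merged into one kernel-verified Lean document; each statement's English description precedes it below -/
import Mathlib

section
/- Let E be a linear operator on a finite-dimensional normed space with ‖E‖ ≤ 1, and suppose for every ℓ ∈ ℕ there is an operator E_{p^ℓ} with ‖E_{p^ℓ}‖ ≤ 1 and (E_{p^ℓ})^{p^ℓ} = E, where p ≥ 2 is fixed. Suppose moreover that the family is 'continuous at 0': for every sequence (n_k, ℓ_k) with n_k / p^{ℓ_k} → 0, the sequence (E_{p^{ℓ_k}})^{n_k} converges to a common limit. Then for every n ≥ 1 there exists an operator E_n in the closed convex hull of {(E_{p^ℓ})^{⌊p^ℓ/n⌋} : ℓ ∈ ℕ} (indeed a limit point of this family) with ‖E_n‖ ≤ 1 and (E_n)^n = E. -/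
/-!
Split `p ^ ℓ = (p ^ ℓ / n) * n + p ^ ℓ % n`. By compactness of the unit ball, some subsequence of
`(F ℓ) ^ (p ^ ℓ / n)` converges to an operator `En`, while the remainders `(F ℓ) ^ (p ^ ℓ % n)`
converge to the limit at `0` of the family, since their exponents are bounded by `n`; taking
all exponents `0` shows that this limit is `1`. Passing to the limit in
`E = ((F ℓ) ^ (p ^ ℓ / n)) ^ n * (F ℓ) ^ (p ^ ℓ % n)` gives `En ^ n = E`.
-/

open Filter Topology

theorem ContinuousLinearMap.norm_pow_le_one {𝕜 E : Type*} [NontriviallyNormedField 𝕜]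
    [SeminormedAddCommGroup E] [NormedSpace 𝕜 E] {f : E →L[𝕜] E} (hf : ‖f‖ ≤ 1) (m : ℕ) :
    ‖f ^ m‖ ≤ 1 := by
  cases m with
  | zero => exact ContinuousLinearMap.norm_id_le
  | succ m => exact (norm_pow_le' f m.succ_pos).trans (pow_le_one₀ (norm_nonneg f) hf)

theorem tendsto_mod_div_pow_nhds_zero {p n : ℕ} (hp : 1 < p) (hn : 0 < n) :
    Tendsto (fun ℓ : ℕ => ((p ^ ℓ % n : ℕ) : ℝ) / (p : ℝ) ^ ℓ) atTop (𝓝 0) := by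
  have hpow : Tendsto (fun ℓ : ℕ => (p : ℝ) ^ ℓ) atTop atTop :=
    tendsto_pow_atTop_atTop_of_one_lt (by exact_mod_cast hp)
  refine squeeze_zero (fun ℓ => by positivity) (fun ℓ => ?_) ((tendsto_const_nhds (x := (n : ℝ))).div_atTop hpow)
  gcongr
  exact_mod_cast (Nat.mod_lt _ hn).le

theorem pow_eq_of_tendsto_pow_div_of_tendsto_pow_mod {ι M : Type*} [Monoid M] [TopologicalSpace M]
    [ContinuousMul M] [T2Space M] {l : Filter ι} [l.NeBot] {a : ι → M} {m : ι → ℕ} {b x : M}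
    (n : ℕ) (hroot : ∀ k, a k ^ m k = b) (hdiv : Tendsto (fun k => a k ^ (m k / n)) l (𝓝 x))
    (hmod : Tendsto (fun k => a k ^ (m k % n)) l (𝓝 1)) : x ^ n = b := by
  have hprod : Tendsto (fun k => (a k ^ (m k / n)) ^ n * a k ^ (m k % n)) l (𝓝 (x ^ n * 1)) :=
    (hdiv.pow n).mul hmod
  have hconst : ∀ k, (a k ^ (m k / n)) ^ n * a k ^ (m k % n) = b := fun k => by
    rw [← pow_mul, ← pow_add, Nat.div_add_mod', hroot]
  simp only [hconst, mul_one] at hprod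
  exact tendsto_nhds_unique hprod tendsto_const_nhds

theorem p_infinite_divisibility_implies_roots_general
    (V : Type*) [NormedAddCommGroup V] [NormedSpace ℂ V] [FiniteDimensional ℂ V]
    (p : ℕ) (hp : 2 ≤ p) (E : V →L[ℂ] V)
    (F : ℕ → (V →L[ℂ] V))
    (hFnorm : ∀ ℓ, ‖F ℓ‖ ≤ 1)
    (hFroot : ∀ ℓ, (F ℓ) ^ (p ^ ℓ) = E)
    (hcont : ∃ Q : V →L[ℂ] V, ∀ (nk ℓk : ℕ → ℕ),
      Filter.Tendsto (fun k => (nk k : ℝ) / (p ^ (ℓk k) : ℝ)) Filter.atTop (nhds 0) →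
      Filter.Tendsto (fun k => (F (ℓk k)) ^ (nk k)) Filter.atTop (nhds Q)) :
    ∀ n : ℕ, 1 ≤ n → ∃ En : V →L[ℂ] V,
      En ∈ closure {G | ∃ ℓ : ℕ, G = (F ℓ) ^ (p ^ ℓ / n)} ∧
      ‖En‖ ≤ 1 ∧ En ^ n = E := by
  obtain ⟨Q, hQ⟩ := hcont
  have hQ1 : Q = 1 := by
    have h := hQ (fun _ => 0) (fun _ => 0) (by simp)
    simp only [pow_zero] at h
    exact tendsto_nhds_unique h tendsto_const_nhds
  subst hQ1
  intro n hn
  obtain ⟨En, hEn, φ, hφ, hlim⟩ := (isCompact_closedBall (0 : V →L[ℂ] V) 1).tendsto_subseq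
    fun ℓ => mem_closedBall_zero_iff.2 (ContinuousLinearMap.norm_pow_le_one (hFnorm ℓ) (p ^ ℓ / n))
  refine ⟨En, mem_closure_of_tendsto hlim (Eventually.of_forall fun k => ⟨φ k, rfl⟩),
    mem_closedBall_zero_iff.1 hEn, ?_⟩
  have hratio := (tendsto_mod_div_pow_nhds_zero (by omega : 1 < p) hn).comp hφ.tendsto_atTop
  exact pow_eq_of_tendsto_pow_div_of_tendsto_pow_mod n (fun k => hFroot (φ k)) hlim
    (hQ (fun k => p ^ φ k % n) φ hratio)

theorem p_infinite_divisibility_implies_roots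
    (V : Type*) [NormedAddCommGroup V] [NormedSpace ℂ V] [FiniteDimensional ℂ V]
    (p : ℕ) (hp : 2 ≤ p) (E : V →L[ℂ] V) (hE : ‖E‖ ≤ 1)
    (F : ℕ → (V →L[ℂ] V))
    (hFnorm : ∀ ℓ, ‖F ℓ‖ ≤ 1)
    (hFroot : ∀ ℓ, (F ℓ) ^ (p ^ ℓ) = E)
    (hcont : ∃ Q : V →L[ℂ] V, ∀ (nk ℓk : ℕ → ℕ),
      Filter.Tendsto (fun k => (nk k : ℝ) / (p ^ (ℓk k) : ℝ)) Filter.atTop (nhds 0) →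
      Filter.Tendsto (fun k => (F (ℓk k)) ^ (nk k)) Filter.atTop (nhds Q)) :
    ∀ n : ℕ, 1 ≤ n → ∃ En : V →L[ℂ] V,
      En ∈ closure {G | ∃ ℓ : ℕ, G = (F ℓ) ^ (p ^ ℓ / n)} ∧
      ‖En‖ ≤ 1 ∧ En ^ n = E :=
  p_infinite_divisibility_implies_roots_general V p hp E F hFnorm hFroot hcont
end

section
/- There is no 2×2-system quantum channel square root of the channel whose matrix representation in the Pauli basis is diag(1, λ, −λ, −1) with 0 < λ < 1; more precisely, any real 4×4 matrix F with F² = diag(1, λ, −λ, −1) must have non-real eigenvalues, while a matrix representing a Hermiticity-preserving map (such as a quantum channel in the Pauli basis) is real and its complex eigenvalues come in conjugate pairs, so F cannot represent a quantum channel. -/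
/-! Over `ℂ` the spectral mapping theorem gives `σ(F²) = {μ² | μ ∈ σ(F)}`. Since `F²` is diagonal
with the entry `-1`, some eigenvalue `μ` of `F` satisfies `μ² = -1`, and a real number never
squares to a negative one. -/

open Matrix

theorem Complex.im_ne_zero_of_re_sq_neg {z : ℂ} (h : (z ^ 2).re < 0) : z.im ≠ 0 := by
  intro him
  rw [sq, Complex.mul_re, him, mul_zero, sub_zero] at h
  exact (mul_self_nonneg z.re).not_gt h

theorem spectrum.exists_im_ne_zero_of_mem_spectrum_sq {A : Type*} [Ring A] [Algebra ℂ A]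
    (a : A) {c : ℂ} (hc : c ∈ spectrum ℂ (a ^ 2)) (hre : c.re < 0) :
    ∃ μ ∈ spectrum ℂ a, μ.im ≠ 0 := by
  rw [spectrum.map_pow_of_pos a two_pos] at hc
  obtain ⟨μ, hμ, rfl⟩ := hc
  exact ⟨μ, hμ, Complex.im_ne_zero_of_re_sq_neg hre⟩

theorem Matrix.exists_im_ne_zero_mem_spectrum_of_sq_eq_diagonal {n : Type*} [Fintype n]
    [DecidableEq n] {F : Matrix n n ℝ} {d : n → ℝ} (hF : F ^ 2 = diagonal d) {i : n}
    (hi : d i < 0) : ∃ μ ∈ spectrum ℂ (F.map Complex.ofReal), μ.im ≠ 0 := by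
  have hsq : F.map Complex.ofReal ^ 2 = diagonal fun j ↦ (d j : ℂ) := by
    have h := map_pow (Complex.ofRealHom.mapMatrix (m := n)) F 2
    rw [RingHom.mapMatrix_apply, RingHom.mapMatrix_apply, hF,
      diagonal_map (map_zero _)] at h
    exact h.symm
  refine spectrum.exists_im_ne_zero_of_mem_spectrum_sq _ (c := d i) ?_ (by simpa using hi)
  rw [hsq, spectrum_diagonal]
  exact ⟨i, rfl⟩

theorem real_sqrt_of_diag_has_nonreal_eigenvalue_general
    (l : ℝ)
    (F : Matrix (Fin 4) (Fin 4) ℝ)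
    (hF : F ^ 2 = Matrix.diagonal ![1, l, -l, -1]) :
    ∃ μ ∈ spectrum ℂ (F.map (Complex.ofReal)), μ.im ≠ 0 :=
  exists_im_ne_zero_mem_spectrum_of_sq_eq_diagonal hF (i := 3) (by simp)

theorem real_sqrt_of_diag_has_nonreal_eigenvalue
    (l : ℝ) (hl : 0 < l) (hl1 : l < 1)
    (F : Matrix (Fin 4) (Fin 4) ℝ)
    (hF : F ^ 2 = Matrix.diagonal ![1, l, -l, -1]) :
    ∃ μ ∈ spectrum ℂ (F.map (Complex.ofReal)), μ.im ≠ 0 :=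
  real_sqrt_of_diag_has_nonreal_eigenvalue_general l F hF
end

section
/- Let P be the m-cycle permutation matrix on ℂ^m (P|i⟩ = |i−1 mod m⟩) extended by zero to a larger space (E = P ⊕ 0). For m ≥ 2, E has no m-th root F (with F^m = E) whose eigenvalues of modulus 1 form a complete set of n-th roots of unity {e^{2πi r/n} : r = 0,…,n−1} for some n. That is, any F with F^m = E has unimodular spectrum consisting of m-th roots of the m-th roots of unity, i.e. m²-th roots of unity, one from each class e^{2πi(r + m k_r)/m²}, and such a set cannot equal a full group of n-th roots of unity for any n when m ≥ 2. -/
/-!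
If the peripheral spectrum of `F` were the group of `n`-th roots of unity, it would contain `1`
and also a primitive `m`-th root of unity `ζ`: some eigenvalue `z` of `F` has `z ^ m = ζ`, so
`z` is unimodular, hence `z ^ n = 1` and `ζ ^ n = 1`. But an eigenvector of `F` whose eigenvalue
is an `m`-th root of unity is fixed by `F ^ m = P ⊕ 0`, whose fixed vectors form the line of
vectors constant on the cycle and zero elsewhere. So `1` and `ζ` would share an eigenvector,
forcing `ζ = 1`.
-/

/-- The m-cycle permutation matrix P on ℂ^m, P|i⟩ = |i−1⟩ (mod m). -/
def cycleMatrix (m : ℕ) [NeZero m] : Matrix (ZMod m) (ZMod m) ℂ :=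
  fun i j => if j = i + 1 then 1 else 0

open Matrix Module Module.End

theorem Module.End.HasEigenvalue.eq_of_pow_eq_one_of_eigenspace_pow_le_span
    {K V : Type*} [Field K] [AddCommGroup V] [Module K V] {f : End K V} {m : ℕ} {u : V}
    (hfix : (f ^ m).eigenspace 1 ≤ K ∙ u) {μ ν : K} (hμ : f.HasEigenvalue μ)
    (hν : f.HasEigenvalue ν) (hμm : μ ^ m = 1) (hνm : ν ^ m = 1) : μ = ν := by
  have u_hasEigenvector : ∀ {μ : K}, f.HasEigenvalue μ → μ ^ m = 1 → f.HasEigenvector μ u := by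
    intro μ hμ hμm
    obtain ⟨v, hv⟩ := hμ.exists_hasEigenvector
    have hv_fixed : v ∈ (f ^ m).eigenspace 1 :=
      mem_eigenspace_iff.2 (by rw [hv.pow_apply, hμm, one_smul])
    obtain ⟨a, rfl⟩ := Submodule.mem_span_singleton.1 (hfix hv_fixed)
    have ha : a ≠ 0 := by rintro rfl; exact hv.2 (zero_smul K u)
    refine ⟨?_, fun hu0 => hv.2 (by rw [hu0, smul_zero])⟩
    simpa [inv_smul_smul₀ ha] using (f.eigenspace μ).smul_mem a⁻¹ hv.1
  have hμu := u_hasEigenvector hμ hμm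
  have hνu := u_hasEigenvector hν hνm
  exact smul_left_injective K hμu.2 (hμu.apply_eq_smul.symm.trans hνu.apply_eq_smul)

section

variable {m : ℕ} [NeZero m]

theorem cycleMatrix_mulVec_apply (x : ZMod m → ℂ) (i : ZMod m) :
    (cycleMatrix m *ᵥ x) i = x (i + 1) := by
  simp [cycleMatrix, mulVec, dotProduct, ite_mul]

theorem eq_of_cycleMatrix_mulVec_eq_self {x : ZMod m → ℂ}
    (hx : cycleMatrix m *ᵥ x = x) (i : ZMod m) : x i = x 0 := by
  have hstep : ∀ k : ℕ, x k = x 0 := by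
    intro k
    induction k with
    | zero => simp
    | succ k ih => rw [Nat.cast_succ, ← cycleMatrix_mulVec_apply x, hx, ih]
  simpa using hstep i.val

theorem cycleMatrix_mulVec_pow_val {ζ : ℂ} (hζ : ζ ^ m = 1) :
    cycleMatrix m *ᵥ (fun i => ζ ^ i.val) = ζ • fun i => ζ ^ i.val := by
  ext i
  rw [cycleMatrix_mulVec_apply, ZMod.val_add, ← pow_eq_pow_mod _ hζ, pow_add,
    ZMod.val_one_eq_one_mod, ← pow_eq_pow_mod _ hζ, pow_one, Pi.smul_apply, smul_eq_mul, mul_comm]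

variable {ι : Type*} [Fintype ι] [DecidableEq ι]

theorem eigenspace_toLin'_fromBlocks_cycleMatrix_one_le_span :
    eigenspace (toLin' (fromBlocks (cycleMatrix m) 0 0 0 : Matrix (ZMod m ⊕ ι) (ZMod m ⊕ ι) ℂ)) 1
      ≤ ℂ ∙ Sum.elim (1 : ZMod m → ℂ) 0 := by
  intro v hv
  rw [mem_eigenspace_iff, one_smul, toLin'_apply, fromBlocks_mulVec] at hv
  simp only [zero_mulVec, add_zero] at hv
  have hinl : cycleMatrix m *ᵥ (v ∘ Sum.inl) = v ∘ Sum.inl :=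
    funext fun i => congrFun hv (Sum.inl i)
  refine Submodule.mem_span_singleton.2 ⟨v (Sum.inl 0), ?_⟩
  ext (i | d)
  · simpa using (eq_of_cycleMatrix_mulVec_eq_self hinl i).symm
  · simpa using congrFun hv (Sum.inr d)

theorem mem_spectrum_fromBlocks_cycleMatrix {ζ : ℂ} (hζ : ζ ^ m = 1) :
    ζ ∈ spectrum ℂ (fromBlocks (cycleMatrix m) 0 0 0 : Matrix (ZMod m ⊕ ι) (ZMod m ⊕ ι) ℂ) := by
  rw [← spectrum_toLin']
  refine HasEigenvalue.mem_spectrum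
    (hasEigenvalue_of_hasEigenvector (x := Sum.elim (fun i => ζ ^ i.val) 0) ⟨?_, ?_⟩)
  · rw [mem_eigenspace_iff, toLin'_apply, fromBlocks_mulVec]
    ext (i | d) <;> simp [cycleMatrix_mulVec_pow_val hζ]
  · intro h
    simpa using congrFun h (Sum.inl 0)

end

theorem cycle_root_peripheral_spectrum_not_roots_of_unity
    (m D : ℕ) [NeZero m] (hm : 2 ≤ m)
    (F : Matrix (ZMod m ⊕ Fin D) (ZMod m ⊕ Fin D) ℂ)
    (hF : F ^ m = Matrix.fromBlocks (cycleMatrix m) 0 0 0) :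
    ∀ n : ℕ, 1 ≤ n →
      {μ ∈ spectrum ℂ F | ‖μ‖ = 1} ≠ {z : ℂ | z ^ n = 1} := by
  intro n _ hS
  have mem_spectrum_of_pow_eq_one (μ : ℂ) (hμ : μ ^ n = 1) : μ ∈ spectrum ℂ F :=
    (hS ▸ hμ : μ ∈ {μ ∈ spectrum ℂ F | ‖μ‖ = 1}).1
  obtain ⟨ζ, hζ⟩ : ∃ ζ : ℂ, IsPrimitiveRoot ζ m := ⟨_, Complex.isPrimitiveRoot_exp m (NeZero.ne m)⟩
  have hζE : ζ ∈ spectrum ℂ (F ^ m) := hF ▸ mem_spectrum_fromBlocks_cycleMatrix hζ.pow_eq_one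
  rw [spectrum.map_pow_of_pos F (NeZero.pos m)] at hζE
  obtain ⟨z, hzF, hzζ : z ^ m = ζ⟩ := hζE
  have hz : ‖z‖ = 1 := Complex.norm_eq_one_of_pow_eq_one
    (by rw [pow_mul, hzζ, hζ.pow_eq_one] : z ^ (m * m) = 1) (by positivity)
  have hzn : z ^ n = 1 := (hS ▸ ⟨hzF, hz⟩ : z ∈ {z : ℂ | z ^ n = 1})
  have hζF : ζ ∈ spectrum ℂ F :=
    mem_spectrum_of_pow_eq_one ζ (by rw [← hzζ, ← pow_mul, mul_comm, pow_mul, hzn, one_pow])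
  have hasEigenvalue (μ : ℂ) (hμ : μ ∈ spectrum ℂ F) : HasEigenvalue (toLin' F) μ :=
    hasEigenvalue_iff_mem_spectrum.2 (by rwa [spectrum_toLin'])
  have hfix : eigenspace (toLin' F ^ m) 1 ≤ ℂ ∙ Sum.elim (1 : ZMod m → ℂ) 0 := by
    rw [← toLin'_pow, hF]
    exact eigenspace_toLin'_fromBlocks_cycleMatrix_one_le_span
  exact hζ.ne_one (by omega) (HasEigenvalue.eq_of_pow_eq_one_of_eigenspace_pow_le_span hfix
    (hasEigenvalue ζ hζF) (hasEigenvalue 1 (mem_spectrum_of_pow_eq_one 1 (one_pow n)))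
    hζ.pow_eq_one (one_pow m))
end

section
/- If a linear map P on a finite-dimensional vector space satisfies P² = P, and L is a linear map with PLP = PL, then for all t ≥ 0, P·e^{tL} = P·e^{tPL} and the family E_t := P e^{tL} satisfies E_s · E_t = E_{s+t} for all s, t ≥ 0. In particular E := P e^{L} satisfies E = (P e^{L/n})^n for every n ≥ 1, i.e., E is infinitely divisible among maps of this form. -/
open NormedSpace

/-!
`P L P = P L` puts `L` in the closed subalgebra of operators leaving `ker P` invariant, which
therefore contains `exp (t • L)`; so `P` can be inserted in front of `exp (t • L)` at will, giving
`P e^{sL} P e^{tL} = P e^{sL} e^{tL} = P e^{(s+t)L}`. Inserting `P` inside the powers,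
`P (P L)^k = P L^k`, gives `P e^{tL} = P e^{tPL}` term by term, and the `n`-th roots come from
iterating the semigroup law.
-/

namespace IsIdempotentElem

section Algebra

variable (R : Type*) {A : Type*} [CommSemiring R] [Semiring A] [Algebra R A] {P : A}

/-- For a projection `P` of a vector space these are the operators leaving `ker P` invariant. -/
def invariantSubalgebra (hP : IsIdempotentElem P) : Subalgebra R A where
  carrier := {X | P * X * P = P * X}
  mul_mem' {X Y} (hX : P * X * P = P * X) (hY : P * Y * P = P * Y) :=
    calc P * (X * Y) * P = P * X * P * Y * P := by rw [hX]; simp only [mul_assoc]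
      _ = P * X * (P * Y * P) := by simp only [mul_assoc]
      _ = P * (X * Y) := by rw [hY, ← mul_assoc, hX, mul_assoc]
  one_mem' := by simpa using hP.eq
  add_mem' {X Y} (hX : P * X * P = P * X) (hY : P * Y * P = P * Y) := by
    change P * (X + Y) * P = P * (X + Y)
    rw [mul_add, add_mul, hX, hY]
  algebraMap_mem' r := by
    change P * algebraMap R A r * P = P * algebraMap R A r
    rw [← Algebra.commutes, mul_assoc, hP.eq]

variable {R} {hP : IsIdempotentElem P} {X : A}

theorem mem_invariantSubalgebra : X ∈ hP.invariantSubalgebra R ↔ P * X * P = P * X :=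
  Iff.rfl

theorem mul_mul_pow_of_mem_invariantSubalgebra (hX : X ∈ hP.invariantSubalgebra R) (n : ℕ) :
    P * (P * X) ^ n = P * X ^ n := by
  induction n with
  | zero => simp
  | succ n ih =>
    have hXn : P * X ^ n * P = P * X ^ n := pow_mem hX n
    rw [pow_succ, ← mul_assoc, ih, ← mul_assoc, hXn, pow_succ, mul_assoc]

theorem isClosed_invariantSubalgebra [TopologicalSpace A] [ContinuousMul A] [T2Space A] :
    IsClosed (hP.invariantSubalgebra R : Set A) :=
  isClosed_eq (by fun_prop) (by fun_prop)

end Algebra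

section Exp

variable {A : Type*} [NormedRing A] [NormedAlgebra ℚ A] {P : A} {hP : IsIdempotentElem P}
  {X Y : A}

theorem mul_exp_mul_of_mem_invariantSubalgebra (hX : X ∈ hP.invariantSubalgebra ℚ) :
    P * exp X * P = P * exp X :=
  exp_mem isClosed_invariantSubalgebra hX

variable [CompleteSpace A]

theorem mul_exp_mul_left_of_mem_invariantSubalgebra (hX : X ∈ hP.invariantSubalgebra ℚ) :
    P * exp (P * X) = P * exp X := by
  rw [exp_eq_tsum ℚ, ← (expSeries_summable' (𝕂 := ℚ) (P * X)).tsum_mul_left,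
    ← (expSeries_summable' (𝕂 := ℚ) X).tsum_mul_left]
  simp only [mul_smul_comm, mul_mul_pow_of_mem_invariantSubalgebra hX]

theorem mul_exp_mul_mul_exp (hX : X ∈ hP.invariantSubalgebra ℚ) (hXY : Commute X Y) :
    P * exp X * (P * exp Y) = P * exp (X + Y) := by
  rw [← mul_assoc, mul_exp_mul_of_mem_invariantSubalgebra hX, mul_assoc,
    exp_add_of_commute hXY]

end Exp

end IsIdempotentElem

theorem pow_eq_of_map_add {R M : Type*} [NonAssocSemiring R] [Monoid M] (f : R → M)
    (hf : ∀ s t, f s * f t = f (s + t)) (t : R) {n : ℕ} (hn : 1 ≤ n) :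
    f t ^ n = f (n * t) := by
  induction n, hn using Nat.le_induction with
  | base => simp
  | succ n _ ih => rw [pow_succ, ih, hf, Nat.cast_succ, add_one_mul]

theorem projected_semigroup_infinitely_divisible
    (V : Type*) [NormedAddCommGroup V] [NormedSpace ℂ V] [FiniteDimensional ℂ V]
    (P L : V →L[ℂ] V) (hP : P * P = P) (hPL : P * L * P = P * L) :
    (∀ t : ℝ, 0 ≤ t → P * exp (t • L) = P * exp (t • (P * L))) ∧
    (∀ s t : ℝ, 0 ≤ s → 0 ≤ t →
      (P * exp (s • L)) * (P * exp (t • L)) = P * exp ((s + t) • L)) ∧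
    (∀ n : ℕ, 1 ≤ n →
      P * exp L = (P * exp (((1 : ℝ) / n) • L)) ^ n) := by
  -- `exp` does not depend on this choice of `ℚ`-structure.
  let : NormedAlgebra ℚ (V →L[ℂ] V) := .restrictScalars ℚ ℂ _
  have hP : IsIdempotentElem P := hP
  have hmem (t : ℝ) : t • L ∈ hP.invariantSubalgebra ℚ := by
    rw [IsIdempotentElem.mem_invariantSubalgebra, mul_smul_comm, smul_mul_assoc, hPL]
  have semigroup (s t : ℝ) :
      P * exp (s • L) * (P * exp (t • L)) = P * exp ((s + t) • L) := by
    rw [IsIdempotentElem.mul_exp_mul_mul_exp (hmem s)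
      (((Commute.refl L).smul_left s).smul_right t), add_smul]
  refine ⟨fun t _ => ?_, fun s t _ _ => semigroup s t, fun n hn => ?_⟩
  · rw [← mul_smul_comm, IsIdempotentElem.mul_exp_mul_left_of_mem_invariantSubalgebra (hmem t)]
  · rw [pow_eq_of_map_add (fun t => P * exp (t • L)) semigroup _ hn,
      mul_one_div_cancel (by positivity), one_smul]
end
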